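/- Let s > 1, let ρ be an s-factor of automorphy for G, and let f : 𝔻 → ℂ be measurable with ‖f‖_{L¹_s(𝔻)} = ∫_𝔻 λ(z)^{2−s}|f(z)| d²z < ∞. Then: (i) for almost every z ∈ 𝔻 the series Θ_ρ[f](z) = Σ_{g∈G} f(g(z))·ρ_g(z)^{−1} converges absolutely; (ii) Θ_ρ[f] is an automorphic form for ρ, and ‖Θ_ρ[f]‖_{L¹_s(𝔻,G)} ≤ ‖f‖_{L¹_s(𝔻)}; (iii) if moreover f is holomorphic, the series converges normally (locally uniformly absolutely) on 𝔻 and Θ_ρ[f] ∈ A¹_ρ(𝔻,G). -/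

import Mathlib

open MeasureTheory

/-- The open unit disc in `ℂ`. -/
def UD : Set ℂ := Metric.ball 0 1

/-!
Each `g ∈ G` is a holomorphic automorphism of `𝔻`, so the Schwarz–Pick lemma for `g` and `g⁻¹`
gives `1 - |g z|² = (1 - |z|²) |g'(z)|`; with `|ρ_g| = |g'|^(-s)` the change of variables `w = g z`
becomes `∫_E λ^(2-s) |f(g z) ρ_g(z)⁻¹| = ∫_{g E} λ^(2-s) |f|`. For `E = ℱ` the tiles `g ℱ` are
almost disjoint in `𝔻`, so summing over `g` gives the norm bound and, by Tonelli, absolute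
convergence a.e. on `ℱ`. The cocycle relation makes convergence `G`-invariant and each `g` maps
null sets to null sets, so it holds a.e. on `𝔻`. For holomorphic `f` the terms are holomorphic,
and the sub-mean-value inequality bounds them near `z₀` by their weighted integrals over a disc
`B ∋ z₀`, that is by `∫_{g B} λ^(2-s) |f|`; by proper discontinuity the `g B` overlap at most
`N` times, so these bounds sum to at most `N ‖f‖`.
-/

open Metric Set Complex Filter Topology
open scoped ComplexConjugate ENNReal Real

lemma mem_UD {z : ℂ} : z ∈ UD ↔ ‖z‖ < 1 := mem_ball_zero_iff

lemma isOpen_UD : IsOpen UD := isOpen_ball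

lemma one_sub_norm_sq_pos {z : ℂ} (hz : z ∈ UD) : 0 < 1 - ‖z‖ ^ 2 := by
  have := mem_UD.mp hz
  nlinarith [norm_nonneg z]

lemma hasDerivAt_of_differentiableOn_UD {φ : ℂ → ℂ} (hφ : DifferentiableOn ℂ φ UD) {z : ℂ}
    (hz : z ∈ UD) : HasDerivAt φ (deriv φ z) z :=
  (hφ.differentiableAt (isOpen_UD.mem_nhds hz)).hasDerivAt

noncomputable def moebius (a z : ℂ) : ℂ := (a - z) / (1 - conj a * z)

@[simp] lemma moebius_self (a : ℂ) : moebius a a = 0 := by simp [moebius]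

@[simp] lemma moebius_zero (a : ℂ) : moebius a 0 = a := by simp [moebius]

lemma norm_conj_mul_lt_one {a z : ℂ} (ha : a ∈ UD) (hz : z ∈ UD) : ‖conj a * z‖ < 1 := by
  rw [norm_mul, RCLike.norm_conj]
  exact mul_lt_one_of_nonneg_of_lt_one_left (norm_nonneg a) (mem_UD.mp ha) (mem_UD.mp hz).le

lemma one_sub_conj_mul_ne_zero {a z : ℂ} (ha : a ∈ UD) (hz : z ∈ UD) : 1 - conj a * z ≠ 0 :=
  sub_ne_zero.mpr fun h => by simpa [← h] using norm_conj_mul_lt_one ha hz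

lemma moebius_mapsTo {a : ℂ} (ha : a ∈ UD) : MapsTo (moebius a) UD UD := by
  intro z hz
  have hd := normSq_pos.mpr (one_sub_conj_mul_ne_zero ha hz)
  have key : normSq (1 - conj a * z) - normSq (a - z) = (1 - normSq a) * (1 - normSq z) := by
    simp only [normSq_apply, sub_re, sub_im, mul_re, mul_im, one_re, one_im, conj_re, conj_im]
    ring
  rw [normSq_eq_norm_sq a, normSq_eq_norm_sq z] at key
  have : normSq (moebius a z) < 1 := by
    rw [moebius, normSq_div, div_lt_one hd]
    nlinarith [one_sub_norm_sq_pos ha, one_sub_norm_sq_pos hz]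
  rw [normSq_eq_norm_sq] at this
  exact mem_UD.mpr (by nlinarith [norm_nonneg (moebius a z)])

lemma hasDerivAt_moebius {a z : ℂ} (h : 1 - conj a * z ≠ 0) :
    HasDerivAt (moebius a) ((‖a‖ ^ 2 - 1) / (1 - conj a * z) ^ 2) z := by
  have hnum : HasDerivAt (fun z : ℂ => a - z) (-1) z := by
    simpa using (hasDerivAt_id z).const_sub a
  have hden : HasDerivAt (fun z : ℂ => 1 - conj a * z) (-conj a) z := by
    simpa using ((hasDerivAt_id z).const_mul (conj a)).const_sub 1
  refine (hnum.div hden h).congr_deriv ?_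
  rw [← mul_conj']
  ring

lemma differentiableOn_moebius {a : ℂ} (ha : a ∈ UD) : DifferentiableOn ℂ (moebius a) UD :=
  fun _ hz => (hasDerivAt_moebius (one_sub_conj_mul_ne_zero ha hz)).differentiableAt
    |>.differentiableWithinAt

lemma norm_deriv_moebius_zero {a : ℂ} (ha : a ∈ UD) :
    ‖deriv (moebius a) 0‖ = 1 - ‖a‖ ^ 2 := by
  rw [(hasDerivAt_moebius (by simp)).deriv, mul_zero, sub_zero, one_pow, div_one, norm_sub_rev]
  norm_cast
  exact Real.norm_of_nonneg (one_sub_norm_sq_pos ha).le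

lemma norm_deriv_moebius_self {a : ℂ} (ha : a ∈ UD) :
    ‖deriv (moebius a) a‖ = (1 - ‖a‖ ^ 2)⁻¹ := by
  rw [(hasDerivAt_moebius (one_sub_conj_mul_ne_zero ha ha)).deriv, conj_mul', norm_div,
    norm_pow, norm_sub_rev]
  norm_cast
  rw [Real.norm_of_nonneg (one_sub_norm_sq_pos ha).le]
  field_simp [(one_sub_norm_sq_pos ha).ne']

/-- The Schwarz–Pick lemma. -/
theorem norm_deriv_mul_le_of_mapsTo_UD {φ : ℂ → ℂ} (hφ : DifferentiableOn ℂ φ UD)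
    (hφm : MapsTo φ UD UD) {a : ℂ} (ha : a ∈ UD) :
    ‖deriv φ a‖ * (1 - ‖a‖ ^ 2) ≤ 1 - ‖φ a‖ ^ 2 := by
  have hb : φ a ∈ UD := hφm ha
  -- `ψ` fixes `0`, so the Schwarz lemma bounds `ψ'(0)`, which the chain rule computes.
  set ψ := moebius (φ a) ∘ φ ∘ moebius a
  have hψ : DifferentiableOn ℂ ψ UD :=
    (differentiableOn_moebius hb).comp (hφ.comp (differentiableOn_moebius ha) (moebius_mapsTo ha))
      (hφm.comp (moebius_mapsTo ha))
  have hψm : MapsTo ψ UD (closedBall (ψ 0) 1) := by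
    simpa [ψ] using ((moebius_mapsTo hb).comp (hφm.comp (moebius_mapsTo ha))).mono_right
      ball_subset_closedBall
  have h0 : (0 : ℂ) ∈ UD := mem_UD.mpr (by simp)
  have hchain : deriv ψ 0 = deriv (moebius (φ a)) (φ a) * (deriv φ a * deriv (moebius a) 0) := by
    have hφa : HasDerivAt φ (deriv φ a) (moebius a 0) := by
      rw [moebius_zero]; exact hasDerivAt_of_differentiableOn_UD hφ ha
    have hb' : HasDerivAt (moebius (φ a)) (deriv (moebius (φ a)) (φ a)) (φ (moebius a 0)) := by
      rw [moebius_zero]; exact hasDerivAt_of_differentiableOn_UD (differentiableOn_moebius hb) hb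
    have hma := hasDerivAt_of_differentiableOn_UD (differentiableOn_moebius ha) h0
    exact (hb'.comp 0 (hφa.comp 0 hma)).deriv
  have hS := norm_deriv_le_one_of_mapsTo_ball hψ hψm one_pos
  rw [hchain, norm_mul, norm_mul, norm_deriv_moebius_self hb, norm_deriv_moebius_zero ha,
    inv_mul_le_iff₀ (one_sub_norm_sq_pos hb), mul_one] at hS
  exact hS

lemma deriv_apply_mul_deriv_of_leftInvOn {φ ψ : ℂ → ℂ} (hφ : DifferentiableOn ℂ φ UD)
    (hφm : MapsTo φ UD UD) (hψ : DifferentiableOn ℂ ψ UD) (hψφ : LeftInvOn ψ φ UD) {z : ℂ}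
    (hz : z ∈ UD) : deriv ψ (φ z) * deriv φ z = 1 := by
  have hid : ψ ∘ φ =ᶠ[𝓝 z] id := eventually_of_mem (isOpen_UD.mem_nhds hz) hψφ
  rw [← ((hasDerivAt_of_differentiableOn_UD hψ (hφm hz)).comp z
    (hasDerivAt_of_differentiableOn_UD hφ hz)).deriv, hid.deriv_eq, deriv_id]

theorem one_sub_norm_sq_apply_eq_of_leftInvOn {φ ψ : ℂ → ℂ} (hφ : DifferentiableOn ℂ φ UD)
    (hφm : MapsTo φ UD UD) (hψ : DifferentiableOn ℂ ψ UD) (hψm : MapsTo ψ UD UD)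
    (hψφ : LeftInvOn ψ φ UD) {z : ℂ} (hz : z ∈ UD) :
    1 - ‖φ z‖ ^ 2 = (1 - ‖z‖ ^ 2) * ‖deriv φ z‖ := by
  have hφ' := norm_deriv_mul_le_of_mapsTo_UD hφ hφm hz
  have hψ' := norm_deriv_mul_le_of_mapsTo_UD hψ hψm (hφm hz)
  rw [hψφ hz] at hψ'
  have hone : ‖deriv ψ (φ z)‖ * ‖deriv φ z‖ = 1 := by
    rw [← norm_mul, deriv_apply_mul_deriv_of_leftInvOn hφ hφm hψ hψφ hz, norm_one]
  nlinarith [mul_le_mul_of_nonneg_left hψ' (norm_nonneg (deriv φ z)), norm_nonneg (deriv φ z),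
    one_sub_norm_sq_pos (hφm hz)]

section MeanValue

variable {E : Type*} [NormedAddCommGroup E] [NormedSpace ℂ E] [CompleteSpace E]
  {u : ℂ → E} {c : ℂ} {r : ℝ}

theorem ofReal_two_pi_mul_enorm_le_lintegral_circleMap (hr : 0 ≤ r)
    (hu : DiffContOnCl ℂ u (ball c r)) :
    ENNReal.ofReal (2 * π) * ‖u c‖ₑ ≤ ∫⁻ θ in Ioo (-π) π, ‖u (circleMap c r θ)‖ₑ := by
  have hmean : (2 * π : ℝ) • u c = ∫ θ in Ioc (-π) π, u (circleMap c r θ) := by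
    have hu' : DiffContOnCl ℂ u (ball c |r|) := by rwa [abs_of_nonneg hr]
    rw [← hu'.circleAverage, Real.circleAverage_eq_integral_add (-π),
      smul_inv_smul₀ Real.two_pi_pos.ne', intervalIntegral.integral_comp_add_right
      (fun θ => u (circleMap c r θ)), intervalIntegral.integral_of_le (by linarith [Real.pi_pos])]
    ring_nf
  calc ENNReal.ofReal (2 * π) * ‖u c‖ₑ = ‖(2 * π : ℝ) • u c‖ₑ := by
        rw [enorm_smul, Real.enorm_eq_ofReal Real.two_pi_pos.le]
    _ ≤ ∫⁻ θ in Ioc (-π) π, ‖u (circleMap c r θ)‖ₑ := hmean ▸ enorm_integral_le_lintegral_enorm _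
    _ = ∫⁻ θ in Ioo (-π) π, ‖u (circleMap c r θ)‖ₑ := setLIntegral_congr Ioo_ae_eq_Ioc.symm

lemma add_polarCoord_symm_eq_circleMap (c : ℂ) (p : ℝ × ℝ) :
    c + Complex.polarCoord.symm p = circleMap c p.1 p.2 := by
  simp only [Complex.polarCoord_symm_apply, circleMap, exp_mul_I]
  push_cast
  ring

lemma circleMap_mem_ball {t θ : ℝ} (ht₀ : 0 < t) (ht : t < r) : circleMap c t θ ∈ ball c r := by
  rwa [mem_ball, dist_eq, circleMap_sub_center, norm_circleMap_zero, abs_of_pos ht₀]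

lemma setLIntegral_Ioo_zero_ofReal (hr : 0 ≤ r) :
    ∫⁻ t in Ioo 0 r, ENNReal.ofReal t = ENNReal.ofReal (r ^ 2 / 2) := by
  rw [setLIntegral_congr Ioo_ae_eq_Ioc, ← ofReal_integral_eq_lintegral_ofReal,
    ← intervalIntegral.integral_of_le hr, integral_id]
  · ring_nf
  · exact (intervalIntegral.intervalIntegrable_id).1
  · exact (ae_restrict_mem measurableSet_Ioc).mono fun t ht => ht.1.le

lemma lintegral_polar_circleMap_le_lintegral_ball (h : ℂ → ℝ≥0∞) (c : ℂ) (r : ℝ) :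
    ∫⁻ p in Ioo 0 r ×ˢ Ioo (-π) π, ENNReal.ofReal p.1 * h (circleMap c p.1 p.2) ≤
      ∫⁻ z in ball c r, h z := by
  rw [← lintegral_indicator measurableSet_ball, ← lintegral_add_left_eq_self _ c,
    ← Complex.lintegral_comp_polarCoord_symm]
  have hS : Ioo 0 r ×ˢ Ioo (-π) π ⊆ Complex.polarCoord.target := by
    rw [Complex.polarCoord_target]
    exact prod_mono Ioo_subset_Ioi_self Subset.rfl
  refine le_of_eq_of_le (setLIntegral_congr_fun (measurableSet_Ioo.prod measurableSet_Ioo)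
    fun p hp => ?_) (lintegral_mono_set hS)
  rw [add_polarCoord_symm_eq_circleMap, indicator_of_mem (circleMap_mem_ball hp.1.1 hp.1.2),
    smul_eq_mul]

theorem ofReal_pi_mul_sq_mul_enorm_le_lintegral_ball (hr : 0 ≤ r)
    (hu : DiffContOnCl ℂ u (ball c r)) :
    ENNReal.ofReal (π * r ^ 2) * ‖u c‖ₑ ≤ ∫⁻ z in ball c r, ‖u z‖ₑ := by
  obtain rfl | hr := hr.eq_or_lt
  · simp
  have hmeas : AEMeasurable (fun p : ℝ × ℝ => ENNReal.ofReal p.1 * ‖u (circleMap c p.1 p.2)‖ₑ)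
      ((volume.restrict (Ioo 0 r)).prod (volume.restrict (Ioo (-π) π))) := by
    rw [Measure.prod_restrict, ← Measure.volume_eq_prod]
    refine (ENNReal.measurable_ofReal.comp measurable_fst).aemeasurable.mul ?_
    refine ContinuousOn.aemeasurable ?_ (measurableSet_Ioo.prod measurableSet_Ioo)
    exact continuous_enorm.comp_continuousOn (hu.continuousOn.comp (by fun_prop)
      fun p hp => subset_closure (circleMap_mem_ball hp.1.1 hp.1.2))
  calc ENNReal.ofReal (π * r ^ 2) * ‖u c‖ₑ
      = (∫⁻ t in Ioo 0 r, ENNReal.ofReal t) * (ENNReal.ofReal (2 * π) * ‖u c‖ₑ) := by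
        rw [setLIntegral_Ioo_zero_ofReal hr.le, ← mul_assoc, ← ENNReal.ofReal_mul (by positivity)]
        ring_nf
    _ = ∫⁻ t in Ioo 0 r, ENNReal.ofReal t * (ENNReal.ofReal (2 * π) * ‖u c‖ₑ) :=
        (lintegral_mul_const' _ _ (by finiteness)).symm
    _ ≤ ∫⁻ t in Ioo 0 r, ∫⁻ θ in Ioo (-π) π, ENNReal.ofReal t * ‖u (circleMap c t θ)‖ₑ := by
        refine setLIntegral_mono' measurableSet_Ioo fun t ht => ?_
        rw [lintegral_const_mul' _ _ ENNReal.ofReal_ne_top]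
        exact mul_le_mul_right (ofReal_two_pi_mul_enorm_le_lintegral_circleMap ht.1.le
          (hu.mono (ball_subset_ball ht.2.le))) _
    _ = ∫⁻ p in Ioo 0 r ×ˢ Ioo (-π) π, ENNReal.ofReal p.1 * ‖u (circleMap c p.1 p.2)‖ₑ := by
        rw [Measure.volume_eq_prod, setLIntegral_prod _ (by rwa [← Measure.prod_restrict])]
    _ ≤ ∫⁻ z in ball c r, ‖u z‖ₑ := lintegral_polar_circleMap_le_lintegral_ball _ c r

end MeanValue

lemma det_restrictScalars_toSpanSingleton (d : ℂ) :
    ((ContinuousLinearMap.toSpanSingleton ℂ d).restrictScalars ℝ).det = normSq d := by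
  simp [ContinuousLinearMap.det, LinearMap.det_restrictScalars, Algebra.norm_complex_apply]

theorem lintegral_image_eq_lintegral_normSq_deriv_mul {φ φ' : ℂ → ℂ} {E : Set ℂ}
    (hE : MeasurableSet E) (hφ : ∀ z ∈ E, HasDerivWithinAt φ (φ' z) E z) (hinj : InjOn φ E)
    (h : ℂ → ℝ≥0∞) :
    ∫⁻ z in φ '' E, h z = ∫⁻ z in E, ENNReal.ofReal (normSq (φ' z)) * h (φ z) := by
  rw [lintegral_image_eq_lintegral_abs_det_fderiv_mul volume hE
    (fun z hz => ((hφ z hz).hasFDerivWithinAt).restrictScalars ℝ) hinj h]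
  simp only [det_restrictScalars_toSpanSingleton, abs_of_nonneg (normSq_nonneg _)]

lemma measurableSet_image_of_hasDerivWithinAt {φ φ' : ℂ → ℂ} {E : Set ℂ}
    (hE : MeasurableSet E) (hφ : ∀ z ∈ E, HasDerivWithinAt φ (φ' z) E z) (hinj : InjOn φ E) :
    MeasurableSet (φ '' E) :=
  measurable_image_of_fderivWithin hE
    (fun z hz => ((hφ z hz).hasFDerivWithinAt).restrictScalars ℝ) hinj

/-- `λ(z)^(2-s) |f z|`, the integrand of `‖f‖_{L¹_s}`. -/
noncomputable def weightedNorm (s : ℝ) (f : ℂ → ℂ) (z : ℂ) : ℝ≥0∞ :=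
  ENNReal.ofReal ((1 - ‖z‖ ^ 2) ^ (s - 2) * ‖f z‖)

lemma weightedNorm_eq (s : ℝ) (f : ℂ → ℂ) (z : ℂ) :
    weightedNorm s f z = ENNReal.ofReal ((1 - ‖z‖ ^ 2) ^ (s - 2)) * ‖f z‖ₑ := by
  rw [weightedNorm, ENNReal.ofReal_mul' (norm_nonneg _), ofReal_norm]

lemma measurable_weightedNorm {f : ℂ → ℂ} (hf : Measurable f) (s : ℝ) :
    Measurable (weightedNorm s f) := by
  unfold weightedNorm
  fun_prop

lemma aemeasurable_weightedNorm {f : ℂ → ℂ} {μ : Measure ℂ} (hf : AEMeasurable f μ) (s : ℝ) :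
    AEMeasurable (weightedNorm s f) μ := by
  unfold weightedNorm
  fun_prop

lemma weightedNorm_tsum_le {ι : Type*} (s : ℝ) (F : ι → ℂ → ℂ) (z : ℂ) :
    weightedNorm s (fun z => ∑' i, F i z) z ≤ ∑' i, weightedNorm s (F i) z := by
  simp_rw [weightedNorm_eq, ENNReal.tsum_mul_left]
  gcongr
  exact enorm_tsum_le_tsum_enorm

lemma summable_norm_of_tsum_weightedNorm_ne_top {ι : Type*} {s : ℝ} {F : ι → ℂ → ℂ} {z : ℂ}
    (hz : z ∈ UD) (h : ∑' i, weightedNorm s (F i) z ≠ ⊤) : Summable fun i => ‖F i z‖ := by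
  simp_rw [weightedNorm_eq, ENNReal.tsum_mul_left] at h
  refine tsum_enorm_ne_top_iff_summable_norm.mp fun htop => h ?_
  rw [htop, ENNReal.mul_top (ENNReal.ofReal_pos.mpr (Real.rpow_pos_of_pos
    (one_sub_norm_sq_pos hz) _)).ne']

theorem setLIntegral_image_weightedNorm {φ ψ j : ℂ → ℂ} {s : ℝ} (hφ : DifferentiableOn ℂ φ UD)
    (hφm : MapsTo φ UD UD) (hψ : DifferentiableOn ℂ ψ UD) (hψm : MapsTo ψ UD UD)
    (hψφ : LeftInvOn ψ φ UD) (hj : ∀ z ∈ UD, ‖j z‖ = ‖deriv φ z‖ ^ (-s)) (f : ℂ → ℂ)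
    {E : Set ℂ} (hE : MeasurableSet E) (hEUD : E ⊆ UD) :
    ∫⁻ z in φ '' E, weightedNorm s f z =
      ∫⁻ z in E, weightedNorm s (fun z => f (φ z) * (j z)⁻¹) z := by
  have hderiv : ∀ z ∈ E, HasDerivWithinAt φ (deriv φ z) E z := fun z hz =>
    (hasDerivAt_of_differentiableOn_UD hφ (hEUD hz)).hasDerivWithinAt
  rw [lintegral_image_eq_lintegral_normSq_deriv_mul hE hderiv (hψφ.injOn.mono hEUD)]
  refine setLIntegral_congr_fun hE fun z hz => ?_
  have hzUD := hEUD hz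
  set D := ‖deriv φ z‖
  have hD : 0 < D := norm_pos_iff.mpr
    (right_ne_zero_of_mul_eq_one (deriv_apply_mul_deriv_of_leftInvOn hφ hφm hψ hψφ hzUD))
  have hX := one_sub_norm_sq_pos hzUD
  rw [weightedNorm, weightedNorm, ← ENNReal.ofReal_mul (normSq_nonneg _),
    one_sub_norm_sq_apply_eq_of_leftInvOn hφ hφm hψ hψm hψφ hzUD, norm_mul, norm_inv,
    hj z hzUD, Real.rpow_neg hD.le, inv_inv, normSq_eq_norm_sq, Real.mul_rpow hX.le hD.le]
  congr 1
  have hDs : D ^ 2 * D ^ (s - 2) = D ^ s := by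
    rw [← Real.rpow_natCast, ← Real.rpow_add hD]
    norm_num
  rw [← hDs]
  ring

theorem enorm_mul_ofReal_le_setLIntegral_weightedNorm {s : ℝ} {u : ℂ → ℂ} {z₀ z : ℂ} {δ : ℝ}
    {M : ℝ≥0∞} (hM : M ≠ ⊤) (hu : DifferentiableOn ℂ u (closedBall z₀ (2 * δ)))
    (huM : ∀ ζ ∈ ball z₀ (2 * δ), ‖u ζ‖ₑ ≤ M * weightedNorm s u ζ) (hδ : 0 ≤ δ)
    (hz : z ∈ ball z₀ δ) :
    ‖u z‖ₑ * ENNReal.ofReal (π * δ ^ 2) ≤ M * ∫⁻ ζ in ball z₀ (2 * δ), weightedNorm s u ζ := by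
  have hzδ : δ + dist z z₀ ≤ 2 * δ := by linarith [mem_ball.mp hz]
  calc ‖u z‖ₑ * ENNReal.ofReal (π * δ ^ 2) ≤ ∫⁻ ζ in ball z δ, ‖u ζ‖ₑ := by
        rw [mul_comm]
        exact ofReal_pi_mul_sq_mul_enorm_le_lintegral_ball hδ
          (hu.diffContOnCl_ball (closedBall_subset_closedBall' hzδ))
    _ ≤ ∫⁻ ζ in ball z₀ (2 * δ), ‖u ζ‖ₑ := lintegral_mono_set (ball_subset_ball' hzδ)
    _ ≤ ∫⁻ ζ in ball z₀ (2 * δ), M * weightedNorm s u ζ :=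
        setLIntegral_mono' measurableSet_ball huM
    _ = M * ∫⁻ ζ in ball z₀ (2 * δ), weightedNorm s u ζ := lintegral_const_mul' _ _ hM

lemma IsCompact.exists_enorm_le_mul_weightedNorm {K : Set ℂ} (hK : IsCompact K) (hKUD : K ⊆ UD)
    (s : ℝ) : ∃ M : ℝ≥0∞, M ≠ ⊤ ∧ ∀ (u : ℂ → ℂ), ∀ z ∈ K, ‖u z‖ₑ ≤ M * weightedNorm s u z := by
  have hcont : ContinuousOn (fun z : ℂ => ((1 - ‖z‖ ^ 2) ^ (s - 2))⁻¹) K := fun z hz =>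
    ((continuousAt_const.sub (continuous_norm.pow 2).continuousAt).rpow_const
      (Or.inl (one_sub_norm_sq_pos (hKUD hz)).ne')).inv₀
      (Real.rpow_pos_of_pos (one_sub_norm_sq_pos (hKUD hz)) _).ne' |>.continuousWithinAt
  obtain ⟨M, hM⟩ := hK.exists_bound_of_continuousOn hcont
  refine ⟨ENNReal.ofReal M, ENNReal.ofReal_ne_top, fun u z hz => ?_⟩
  have hw := Real.rpow_pos_of_pos (one_sub_norm_sq_pos (hKUD hz)) (s - 2)
  rw [weightedNorm_eq, ← mul_assoc, ← ENNReal.ofReal_mul' hw.le]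
  refine le_mul_of_one_le_left zero_le (ENNReal.one_le_ofReal.mpr ?_)
  calc 1 = ((1 - ‖z‖ ^ 2) ^ (s - 2))⁻¹ * (1 - ‖z‖ ^ 2) ^ (s - 2) := (inv_mul_cancel₀ hw.ne').symm
    _ ≤ M * (1 - ‖z‖ ^ 2) ^ (s - 2) := by gcongr; exact (le_abs_self _).trans (hM z hz)

lemma exists_summable_bound_of_enorm_le {X ι E : Type*} [SeminormedAddCommGroup E]
    {F : ι → X → E} {l : Filter X} {Q : ι → ℝ≥0∞} (hQ : ∑' i, Q i ≠ ⊤)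
    (h : ∀ᶠ x in l, ∀ i, ‖F i x‖ₑ ≤ Q i) :
    ∃ b : ι → ℝ, Summable b ∧ ∀ᶠ x in l, ∀ i, ‖F i x‖ ≤ b i :=
  ⟨fun i => (Q i).toReal, ENNReal.summable_toReal hQ, h.mono fun x hx i => toReal_enorm (F i x) ▸
    ENNReal.toReal_mono (ne_top_of_le_ne_top hQ (ENNReal.le_tsum i)) (hx i)⟩

theorem IsCompact.exists_summable_bound {X ι E : Type*} [TopologicalSpace X]
    [SeminormedAddCommGroup E] {F : ι → X → E} {K : Set X} (hK : IsCompact K)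
    (hloc : ∀ x ∈ K, ∃ b : ι → ℝ, Summable b ∧ ∀ᶠ y in 𝓝 x, ∀ i, ‖F i y‖ ≤ b i) :
    ∃ b : ι → ℝ, Summable b ∧ (∀ i, 0 ≤ b i) ∧ ∀ i, ∀ y ∈ K, ‖F i y‖ ≤ b i := by
  refine hK.induction_on ⟨0, summable_zero, fun _ => le_rfl, fun _ _ h => h.elim⟩
    (fun S T hST ⟨b, hb, hb0, hbT⟩ => ⟨b, hb, hb0, fun i y hy => hbT i y (hST hy)⟩)
    (fun S T ⟨b, hb, hb0, hbS⟩ ⟨c, hc, hc0, hcT⟩ => ⟨b + c, hb.add hc,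
      fun i => add_nonneg (hb0 i) (hc0 i), fun i y hy => hy.elim
        (fun h => (hbS i y h).trans (le_add_of_nonneg_right (hc0 i)))
        (fun h => (hcT i y h).trans (le_add_of_nonneg_left (hb0 i)))⟩) fun x hx => ?_
  obtain ⟨b, hb, hev⟩ := hloc x hx
  exact ⟨{y | ∀ i, ‖F i y‖ ≤ b i}, mem_nhdsWithin_of_mem_nhds hev,
    b, hb, fun i => (norm_nonneg _).trans (hev.self_of_nhds i), fun i y hy => hy i⟩

theorem summable_iSup_norm_of_forall_le {X ι E : Type*} [SeminormedAddCommGroup E]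
    {F : ι → X → E} {K : Set X} {b : ι → ℝ} (hb : Summable b) (hb0 : ∀ i, 0 ≤ b i)
    (h : ∀ i, ∀ y ∈ K, ‖F i y‖ ≤ b i) : Summable fun i => ⨆ y ∈ K, ‖F i y‖ :=
  hb.of_nonneg_of_le (fun _ => Real.iSup_nonneg fun _ => Real.iSup_nonneg fun _ => norm_nonneg _)
    fun i => Real.iSup_le (fun y => Real.iSup_le (h i y) (hb0 i)) (hb0 i)

theorem differentiableOn_tsum_of_locally_summable_bound {ι E : Type*} [NormedAddCommGroup E]
    [NormedSpace ℂ E] [CompleteSpace E] {F : ι → ℂ → E} {U : Set ℂ} (hU : IsOpen U)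
    (hF : ∀ i, DifferentiableOn ℂ (F i) U)
    (hloc : ∀ x ∈ U, ∃ b : ι → ℝ, Summable b ∧ ∀ᶠ y in 𝓝 x, ∀ i, ‖F i y‖ ≤ b i) :
    DifferentiableOn ℂ (fun z => ∑' i, F i z) U := by
  refine (SummableLocallyUniformlyOn_of_locally_bounded hU fun K hKU hK => ?_).differentiableOn
    hU fun i z hz => (hF i).differentiableAt (hU.mem_nhds hz)
  obtain ⟨b, hb, -, hbK⟩ := hK.exists_summable_bound fun x hx => hloc x (hKU hx)
  exact ⟨b, hb, hbK⟩

theorem tsum_setLIntegral_le_mul_of_finite_multiplicity {α ι : Type*} [MeasurableSpace α]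
    [Countable ι] {μ : Measure α} {S : ι → Set α} (hS : ∀ i, MeasurableSet (S i))
    {h : α → ℝ≥0∞} (hh : Measurable h) {N : ℕ}
    (hN : ∀ x i₀, x ∈ S i₀ → ∃ t : Finset ι, t.card ≤ N ∧ ∀ i, x ∈ S i → i ∈ t) :
    ∑' i, ∫⁻ x in S i, h x ∂μ ≤ N * ∫⁻ x in ⋃ i, S i, h x ∂μ := by
  have hpt : ∀ x, ∑' i, (S i).indicator h x ≤ N * (⋃ i, S i).indicator h x := by
    intro x
    by_cases hx : ∃ i₀, x ∈ S i₀
    · obtain ⟨i₀, hi₀⟩ := hx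
      obtain ⟨t, htN, ht⟩ := hN x i₀ hi₀
      rw [tsum_eq_sum fun i hi => indicator_of_notMem (fun hxi => hi (ht i hxi)) h]
      calc ∑ i ∈ t, (S i).indicator h x ≤ ∑ _i ∈ t, (⋃ i, S i).indicator h x :=
            Finset.sum_le_sum fun i _ => indicator_le_indicator_of_subset (subset_iUnion S i)
              (fun _ => zero_le) x
        _ ≤ N * (⋃ i, S i).indicator h x := by
            rw [Finset.sum_const, nsmul_eq_mul]
            gcongr
    · push Not at hx
      simp [indicator_of_notMem (hx _)]
  calc ∑' i, ∫⁻ x in S i, h x ∂μ = ∫⁻ x, ∑' i, (S i).indicator h x ∂μ := by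
        rw [lintegral_tsum fun i => (hh.indicator (hS i)).aemeasurable]
        simp_rw [lintegral_indicator (hS _)]
    _ ≤ ∫⁻ x, N * (⋃ i, S i).indicator h x ∂μ := lintegral_mono hpt
    _ = N * ∫⁻ x in ⋃ i, S i, h x ∂μ := by
        rw [lintegral_const_mul _ (hh.indicator (MeasurableSet.iUnion hS)),
          lintegral_indicator (MeasurableSet.iUnion hS)]

structure IsHolomorphicDiscAction {G : Type*} [Group G] (A : G → ℂ → ℂ) : Prop where
  map_one : ∀ z ∈ UD, A 1 z = z
  map_mul : ∀ g h : G, ∀ z ∈ UD, A (g * h) z = A g (A h z)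
  differentiableOn : ∀ g, DifferentiableOn ℂ (A g) UD
  mapsTo : ∀ g, MapsTo (A g) UD UD

structure IsFactorOfAutomorphy {G : Type*} [Group G] (A : G → ℂ → ℂ) (s : ℝ)
    (ρ : G → ℂ → ℂ) : Prop where
  differentiableOn : ∀ g, DifferentiableOn ℂ (ρ g) UD
  ne_zero : ∀ g, ∀ z ∈ UD, ρ g z ≠ 0
  map_mul : ∀ g h : G, ∀ z ∈ UD, ρ (g * h) z = ρ g (A h z) * ρ h z
  norm_eq : ∀ g, ∀ z ∈ UD, ‖ρ g z‖ = ‖deriv (A g) z‖ ^ (-s)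

noncomputable def poincareTerm {G : Type*} (A ρ : G → ℂ → ℂ) (f : ℂ → ℂ) (g : G) (z : ℂ) : ℂ :=
  f (A g z) * (ρ g z)⁻¹

section PoincareSeries

variable {G : Type*} [Group G] {A ρ : G → ℂ → ℂ} {s : ℝ} {f : ℂ → ℂ}

lemma IsHolomorphicDiscAction.leftInvOn (hA : IsHolomorphicDiscAction A) (g : G) :
    LeftInvOn (A g⁻¹) (A g) UD := fun z hz => by
  rw [← hA.map_mul _ _ z hz, inv_mul_cancel, hA.map_one _ hz]

lemma IsHolomorphicDiscAction.injOn (hA : IsHolomorphicDiscAction A) (g : G) :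
    InjOn (A g) UD :=
  (hA.leftInvOn g).injOn

lemma IsHolomorphicDiscAction.measurableSet_image (hA : IsHolomorphicDiscAction A) (g : G)
    {E : Set ℂ} (hE : MeasurableSet E) (hEUD : E ⊆ UD) : MeasurableSet (A g '' E) :=
  measurableSet_image_of_hasDerivWithinAt hE (fun _ hz =>
    (hasDerivAt_of_differentiableOn_UD (hA.differentiableOn g) (hEUD hz)).hasDerivWithinAt)
    ((hA.injOn g).mono hEUD)

theorem setLIntegral_image_weightedNorm_eq_poincareTerm (hA : IsHolomorphicDiscAction A)
    (hρ : IsFactorOfAutomorphy A s ρ) (f : ℂ → ℂ) (g : G) {E : Set ℂ} (hE : MeasurableSet E)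
    (hEUD : E ⊆ UD) :
    ∫⁻ z in A g '' E, weightedNorm s f z = ∫⁻ z in E, weightedNorm s (poincareTerm A ρ f g) z :=
  setLIntegral_image_weightedNorm (hA.differentiableOn g) (hA.mapsTo g) (hA.differentiableOn g⁻¹)
    (hA.mapsTo g⁻¹) (hA.leftInvOn g) (hρ.norm_eq g) f hE hEUD

lemma poincareTerm_apply (hA : IsHolomorphicDiscAction A) (hρ : IsFactorOfAutomorphy A s ρ)
    (f : ℂ → ℂ) (g h : G) {z : ℂ} (hz : z ∈ UD) :
    poincareTerm A ρ f h (A g z) = ρ g z * poincareTerm A ρ f (h * g) z := by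
  rw [poincareTerm, poincareTerm, hA.map_mul _ _ _ hz, hρ.map_mul _ _ _ hz, mul_inv,
    mul_left_comm, mul_comm (ρ h _)⁻¹, mul_inv_cancel_left₀ (hρ.ne_zero g z hz)]

lemma summable_norm_poincareTerm_apply (hA : IsHolomorphicDiscAction A)
    (hρ : IsFactorOfAutomorphy A s ρ) (g : G) {z : ℂ} (hz : z ∈ UD)
    (hsum : Summable fun h => ‖poincareTerm A ρ f h z‖) :
    Summable fun h => ‖poincareTerm A ρ f h (A g z)‖ := by
  simp_rw [poincareTerm_apply hA hρ f g _ hz, norm_mul]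
  exact ((Equiv.mulRight g).summable_iff.mpr hsum).mul_left _

theorem tsum_poincareTerm_apply (hA : IsHolomorphicDiscAction A)
    (hρ : IsFactorOfAutomorphy A s ρ) (f : ℂ → ℂ) (g : G) {z : ℂ} (hz : z ∈ UD) :
    ∑' h, poincareTerm A ρ f h (A g z) = ρ g z * ∑' h, poincareTerm A ρ f h z := by
  simp_rw [poincareTerm_apply hA hρ f g _ hz, tsum_mul_left]
  exact congrArg _ ((Equiv.mulRight g).tsum_eq fun h => poincareTerm A ρ f h z)

lemma aemeasurable_weightedNorm_poincareTerm (hA : IsHolomorphicDiscAction A)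
    (hρ : IsFactorOfAutomorphy A s ρ) (hf : Measurable f) (g : G) {E : Set ℂ}
    (hE : MeasurableSet E) (hEUD : E ⊆ UD) :
    AEMeasurable (weightedNorm s (poincareTerm A ρ f g)) (volume.restrict E) :=
  aemeasurable_weightedNorm ((hf.comp_aemeasurable
    (((hA.differentiableOn g).continuousOn.mono hEUD).aemeasurable hE)).mul
    (((hρ.differentiableOn g).continuousOn.mono hEUD).aemeasurable hE).inv) s

lemma differentiableOn_poincareTerm (hA : IsHolomorphicDiscAction A)
    (hρ : IsFactorOfAutomorphy A s ρ) (hf : DifferentiableOn ℂ f UD) (g : G) :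
    DifferentiableOn ℂ (poincareTerm A ρ f g) UD :=
  (hf.comp (hA.differentiableOn g) (hA.mapsTo g)).mul ((hρ.differentiableOn g).inv (hρ.ne_zero g))

variable [Countable G] {F : Set ℂ}

theorem tsum_setLIntegral_weightedNorm_poincareTerm_le (hA : IsHolomorphicDiscAction A)
    (hρ : IsFactorOfAutomorphy A s ρ) (f : ℂ → ℂ) (hF_sub : F ⊆ UD)
    (hF_meas : MeasurableSet F) (hF_disj : ∀ g h : G, g ≠ h → volume (A g '' F ∩ A h '' F) = 0) :
    ∑' g, ∫⁻ z in F, weightedNorm s (poincareTerm A ρ f g) z ≤ ∫⁻ z in UD, weightedNorm s f z := by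
  simp_rw [← setLIntegral_image_weightedNorm_eq_poincareTerm hA hρ f _ hF_meas hF_sub]
  rw [← lintegral_iUnion₀ (fun g => (hA.measurableSet_image g hF_meas hF_sub).nullMeasurableSet)
    hF_disj]
  exact lintegral_mono_set (iUnion_subset fun g => ((hA.mapsTo g).mono_left hF_sub).image_subset)

theorem IsHolomorphicDiscAction.ae_of_ae_restrict_fundamentalDomain
    (hA : IsHolomorphicDiscAction A) (hF_sub : F ⊆ UD) (hF_meas : MeasurableSet F)
    (hF_cover : volume (UD \ ⋃ g : G, A g '' F) = 0) {P : ℂ → Prop}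
    (hP : ∀ g, ∀ z ∈ UD, P z → P (A g z)) (hPF : ∀ᵐ z ∂volume.restrict F, P z) :
    ∀ᵐ z ∂volume.restrict UD, P z := by
  rw [ae_iff, Measure.restrict_apply' isOpen_UD.measurableSet]
  rw [ae_iff, Measure.restrict_apply' hF_meas] at hPF
  have hcover : {z | ¬P z} ∩ UD ⊆ (UD \ ⋃ g : G, A g '' F) ∪ ⋃ g, A g '' ({z | ¬P z} ∩ F) := by
    rintro z ⟨hPz, hz⟩
    by_cases hmem : z ∈ ⋃ g : G, A g '' F
    · obtain ⟨g, y, hyF, rfl⟩ := mem_iUnion.mp hmem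
      exact Or.inr (mem_iUnion.mpr ⟨g, y, ⟨fun hPy => hPz (hP g y (hF_sub hyF) hPy), hyF⟩, rfl⟩)
    · exact Or.inl ⟨hz, hmem⟩
  refine measure_mono_null hcover (measure_union_null hF_cover (measure_iUnion_null fun g => ?_))
  exact addHaar_image_eq_zero_of_differentiableOn_of_addHaar_eq_zero volume
    (((hA.differentiableOn g).restrictScalars ℝ).mono fun z hz => hF_sub hz.2) hPF

theorem ae_summable_norm_poincareTerm (hA : IsHolomorphicDiscAction A)
    (hρ : IsFactorOfAutomorphy A s ρ) (hf : Measurable f) (hF_sub : F ⊆ UD)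
    (hF_meas : MeasurableSet F) (hF_cover : volume (UD \ ⋃ g : G, A g '' F) = 0)
    (hF_disj : ∀ g h : G, g ≠ h → volume (A g '' F ∩ A h '' F) = 0)
    (hf_int : ∫⁻ z in UD, weightedNorm s f z < ⊤) :
    ∀ᵐ z ∂volume.restrict UD, Summable fun g => ‖poincareTerm A ρ f g z‖ := by
  refine hA.ae_of_ae_restrict_fundamentalDomain hF_sub hF_meas hF_cover
    (fun g z hz => summable_norm_poincareTerm_apply hA hρ g hz) ?_
  have hmeas := fun g => aemeasurable_weightedNorm_poincareTerm hA hρ hf g hF_meas hF_sub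
  have hfin : ∫⁻ z in F, ∑' g, weightedNorm s (poincareTerm A ρ f g) z ≠ ⊤ := by
    rw [lintegral_tsum hmeas]
    exact ((tsum_setLIntegral_weightedNorm_poincareTerm_le hA hρ f hF_sub hF_meas
      hF_disj).trans_lt hf_int).ne
  filter_upwards [ae_lt_top' (AEMeasurable.tsum hmeas) hfin,
    ae_restrict_mem hF_meas] with z hz hzF
  exact summable_norm_of_tsum_weightedNorm_ne_top (hF_sub hzF) hz.ne

theorem lintegral_weightedNorm_poincareSeries_le (hA : IsHolomorphicDiscAction A)
    (hρ : IsFactorOfAutomorphy A s ρ) (hf : Measurable f) (hF_sub : F ⊆ UD)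
    (hF_meas : MeasurableSet F) (hF_disj : ∀ g h : G, g ≠ h → volume (A g '' F ∩ A h '' F) = 0) :
    ∫⁻ z in F, weightedNorm s (fun z => ∑' g, poincareTerm A ρ f g z) z ≤
      ∫⁻ z in UD, weightedNorm s f z :=
  calc ∫⁻ z in F, weightedNorm s (fun z => ∑' g, poincareTerm A ρ f g z) z
      ≤ ∫⁻ z in F, ∑' g, weightedNorm s (poincareTerm A ρ f g) z :=
        lintegral_mono fun z => weightedNorm_tsum_le s _ z
    _ = ∑' g, ∫⁻ z in F, weightedNorm s (poincareTerm A ρ f g) z :=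
        lintegral_tsum fun g => aemeasurable_weightedNorm_poincareTerm hA hρ hf g hF_meas hF_sub
    _ ≤ ∫⁻ z in UD, weightedNorm s f z :=
        tsum_setLIntegral_weightedNorm_poincareTerm_le hA hρ f hF_sub hF_meas hF_disj

theorem IsHolomorphicDiscAction.tsum_setLIntegral_image_le (hA : IsHolomorphicDiscAction A)
    {U : Set ℂ} (hUUD : U ⊆ UD) (hU : {g : G | (A g '' U ∩ U).Nonempty}.Finite) {B : Set ℂ}
    (hB : MeasurableSet B) (hBU : B ⊆ U) {h : ℂ → ℝ≥0∞} (hh : Measurable h) :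
    ∑' g, ∫⁻ z in A g '' B, h z ≤ hU.toFinset.card * ∫⁻ z in UD, h z := by
  classical
  refine (tsum_setLIntegral_le_mul_of_finite_multiplicity
    (fun g => hA.measurableSet_image g hB (hBU.trans hUUD)) hh fun z g₀ hg₀ => ?_).trans
    (by gcongr; exact iUnion_subset fun g =>
      ((hA.mapsTo g).mono_left (hBU.trans hUUD)).image_subset)
  refine ⟨hU.toFinset.image (g₀ * ·), Finset.card_image_le, fun g hg => ?_⟩
  obtain ⟨y₀, hy₀, rfl⟩ := hg₀
  obtain ⟨y, hy, hyz⟩ := hg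
  refine Finset.mem_image.mpr ⟨g₀⁻¹ * g, hU.mem_toFinset.mpr ⟨y₀, ⟨y, hBU hy, ?_⟩, hBU hy₀⟩,
    mul_inv_cancel_left g₀ g⟩
  rw [hA.map_mul _ _ _ (hUUD (hBU hy)), hyz, hA.leftInvOn g₀ (hUUD (hBU hy₀))]

theorem exists_summable_bound_poincareTerm (hA : IsHolomorphicDiscAction A)
    (hρ : IsFactorOfAutomorphy A s ρ)
    (hA_proper : ∀ z ∈ UD, ∃ U : Set ℂ, U ⊆ UD ∧ IsOpen U ∧ z ∈ U ∧
      {g : G | (A g '' U ∩ U).Nonempty}.Finite)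
    (hf : Measurable f) (hf_holo : DifferentiableOn ℂ f UD)
    (hf_int : ∫⁻ z in UD, weightedNorm s f z < ⊤) {z₀ : ℂ} (hz₀ : z₀ ∈ UD) :
    ∃ b : G → ℝ, Summable b ∧ ∀ᶠ z in 𝓝 z₀, ∀ g, ‖poincareTerm A ρ f g z‖ ≤ b g := by
  obtain ⟨U, hUUD, hU, hz₀U, hfin⟩ := hA_proper z₀ hz₀
  obtain ⟨ε, hε, hεU⟩ := Metric.isOpen_iff.mp hU z₀ hz₀U
  obtain ⟨δ, hδ, hδε⟩ : ∃ δ, 0 < δ ∧ 2 * δ < ε := ⟨ε / 3, by positivity, by linarith⟩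
  set B := ball z₀ (2 * δ)
  have hKU : closedBall z₀ (2 * δ) ⊆ U := (closedBall_subset_ball hδε).trans hεU
  have hBUD : B ⊆ UD := ball_subset_closedBall.trans (hKU.trans hUUD)
  obtain ⟨M, hMtop, hM⟩ :=
    (isCompact_closedBall z₀ (2 * δ)).exists_enorm_le_mul_weightedNorm (hKU.trans hUUD) s
  set Q : G → ℝ≥0∞ := fun g => ∫⁻ z in A g '' B, weightedNorm s f z
  have hQ : ∑' g, Q g ≠ ⊤ := ((hA.tsum_setLIntegral_image_le hUUD hfin measurableSet_ball
    (ball_subset_closedBall.trans hKU) (measurable_weightedNorm hf s)).trans_lt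
    (ENNReal.mul_lt_top (ENNReal.natCast_lt_top _) hf_int)).ne
  have hmean : ∀ g, ∀ z ∈ ball z₀ δ,
      ‖poincareTerm A ρ f g z‖ₑ * ENNReal.ofReal (π * δ ^ 2) ≤ M * Q g := fun g z hz => by
    simp only [Q]
    rw [setLIntegral_image_weightedNorm_eq_poincareTerm hA hρ f g measurableSet_ball hBUD]
    exact enorm_mul_ofReal_le_setLIntegral_weightedNorm hMtop
      ((differentiableOn_poincareTerm hA hρ hf_holo g).mono (hKU.trans hUUD))
      (fun ζ hζ => hM _ ζ (ball_subset_closedBall hζ)) hδ.le hz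
  have hc : ENNReal.ofReal (π * δ ^ 2) ≠ 0 := (ENNReal.ofReal_pos.mpr (by positivity)).ne'
  refine exists_summable_bound_of_enorm_le (Q := fun g => M * Q g / ENNReal.ofReal (π * δ ^ 2))
    ?_ (eventually_of_mem (ball_mem_nhds z₀ hδ) fun z hz g => ?_)
  · simp_rw [div_eq_mul_inv, ENNReal.tsum_mul_right, ENNReal.tsum_mul_left]
    exact ENNReal.mul_ne_top (ENNReal.mul_ne_top hMtop hQ) (ENNReal.inv_ne_top.mpr hc)
  · exact (ENNReal.le_div_iff_mul_le (Or.inl hc) (Or.inl ENNReal.ofReal_ne_top)).mpr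
      (hmean g z hz)

end PoincareSeries

theorem poincare_series_convergence
    {G : Type*} [Group G] [Countable G]
    (A : G → ℂ → ℂ)
    (hA_one : ∀ z ∈ UD, A 1 z = z)
    (hA_mul : ∀ g h : G, ∀ z ∈ UD, A (g * h) z = A g (A h z))
    (hA_holo : ∀ g : G, DifferentiableOn ℂ (A g) UD)
    (hA_bij : ∀ g : G, Set.BijOn (A g) UD UD)
    (hA_proper : ∀ z ∈ UD, ∃ U : Set ℂ, U ⊆ UD ∧ IsOpen U ∧ z ∈ U ∧
      {g : G | (A g '' U ∩ U).Nonempty}.Finite)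
    (F : Set ℂ) (hF_sub : F ⊆ UD) (hF_meas : MeasurableSet F)
    (hF_cover : volume (UD \ ⋃ g : G, A g '' F) = 0)
    (hF_disj : ∀ g h : G, g ≠ h → volume (A g '' F ∩ A h '' F) = 0)
    (s : ℝ)
    (ρ : G → ℂ → ℂ)
    (hρ_holo : ∀ g : G, DifferentiableOn ℂ (ρ g) UD)
    (hρ_ne : ∀ g : G, ∀ z ∈ UD, ρ g z ≠ 0)
    (hρ_cocycle : ∀ g h : G, ∀ z ∈ UD, ρ (g * h) z = ρ g (A h z) * ρ h z)
    (hρ_s : ∀ g : G, ∀ z ∈ UD,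
      ‖ρ g z‖ = ‖deriv (A g) z‖ ^ (-s))
    (f : ℂ → ℂ) (hf_meas : Measurable f)
    (hf_int : ∫⁻ z in UD,
      ENNReal.ofReal ((1 - ‖z‖ ^ 2) ^ (s - 2) * ‖f z‖) < ⊤)
    (Θ : ℂ → ℂ) (hΘ : Θ = fun z => ∑' g : G, f (A g z) * (ρ g z)⁻¹) :
    (∀ᵐ z ∂volume.restrict UD,
      Summable fun g : G => ‖f (A g z) * (ρ g z)⁻¹‖) ∧
    (∀ g : G, ∀ z ∈ UD, Θ (A g z) = ρ g z * Θ z) ∧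
    (∫⁻ z in F,
        ENNReal.ofReal ((1 - ‖z‖ ^ 2) ^ (s - 2) * ‖Θ z‖) ≤
      ∫⁻ z in UD,
        ENNReal.ofReal ((1 - ‖z‖ ^ 2) ^ (s - 2) * ‖f z‖)) ∧
    (DifferentiableOn ℂ f UD →
      (∀ K : Set ℂ, K ⊆ UD → IsCompact K →
        Summable fun g : G => ⨆ z ∈ K, ‖f (A g z) * (ρ g z)⁻¹‖) ∧
      DifferentiableOn ℂ Θ UD) := by
  subst hΘ
  have hA : IsHolomorphicDiscAction A := ⟨hA_one, hA_mul, hA_holo, fun g => (hA_bij g).mapsTo⟩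
  have hρ : IsFactorOfAutomorphy A s ρ := ⟨hρ_holo, hρ_ne, hρ_cocycle, hρ_s⟩
  refine ⟨ae_summable_norm_poincareTerm hA hρ hf_meas hF_sub hF_meas hF_cover hF_disj hf_int,
    fun g z hz => tsum_poincareTerm_apply hA hρ f g hz,
    lintegral_weightedNorm_poincareSeries_le hA hρ hf_meas hF_sub hF_meas hF_disj,
    fun hf_holo => ?_⟩
  have hloc := fun z₀ (hz₀ : z₀ ∈ UD) =>
    exists_summable_bound_poincareTerm hA hρ hA_proper hf_meas hf_holo hf_int hz₀
  refine ⟨fun K hKUD hK => ?_, differentiableOn_tsum_of_locally_summable_bound isOpen_UD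
    (differentiableOn_poincareTerm hA hρ hf_holo) hloc⟩
  obtain ⟨b, hb, hb0, hbK⟩ := hK.exists_summable_bound fun z hz => hloc z (hKUD hz)
  exact summable_iSup_norm_of_forall_le hb hb0 hbK
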